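/- arXiv:1801.02758 — 11 statements merged into one kernel-verified Lean document; each statement's English description precedes it below -/
import Mathlib

section
/- Let φ : U → V be a splitting of a poset V at a maximal node m, i.e., φ is a surjective monotone map, there is a finite nonempty set M of maximal nodes of U of positive height with φ⁻¹(m) = M, φ⁻¹(v) is a singleton for every v ≠ m, and whenever φ(x') = x ≤ y in V there exists y' ≥ x' in U with φ(y') = y. Then the image under φ of the set of minimal elements of U equals the set of minimal elements of V. -/
/-- If `φ : U → V` is a splitting of the poset `V` at the maximal node `m`, then the image
under `φ` of the set of minimal elements of `U` equals the set of minimal elements of `V`. -/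
theorem splitting_image_min {U V : Type*} [PartialOrder U] [PartialOrder V]
    (φ : U → V) (m : V) (M : Set U)
    (hmono : Monotone φ) (hsurj : Function.Surjective φ)
    (hmmax : IsMax m) (hmht : 0 < Order.height m)
    (hMfin : M.Finite) (hMne : M.Nonempty)
    (hMmax : ∀ u ∈ M, IsMax u) (hMht : ∀ u ∈ M, 0 < Order.height u)
    (hfib : φ ⁻¹' {m} = M)
    (hsing : ∀ v : V, v ≠ m → ∃! u : U, φ u = v)
    (hlift : ∀ (x' : U) (y : V), φ x' ≤ y → ∃ y' : U, x' ≤ y' ∧ φ y' = y) :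
    φ '' {u : U | IsMin u} = {v : V | IsMin v} := by
  ext v
  constructor
  · rintro ⟨u, hu, rfl⟩
    have hne : φ u ≠ m := by
      intro h
      have : u ∈ M := by rw [← hfib]; exact h
      exact absurd (Order.height_eq_zero.mpr hu) (by simpa using (hMht u this).ne')
    intro w hw
    obtain ⟨x, rfl⟩ := hsurj w
    obtain ⟨y, hxy, hy⟩ := hlift x (φ u) hw
    obtain ⟨u', hu', huniq⟩ := hsing (φ u) hne
    have h1 : y = u := (huniq y hy).trans (huniq u rfl).symm
    have := hu (h1 ▸ hxy)
    exact (congrArg φ (le_antisymm (h1 ▸ hxy) this)).ge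
  · intro hv
    have hne : v ≠ m := by
      rintro rfl
      exact absurd (Order.height_eq_zero.mpr hv) (by simpa using hmht.ne')
    obtain ⟨u, hu, huniq⟩ := hsing v hne
    refine ⟨u, ?_, hu⟩
    intro w hw
    have h1 : φ w ≤ v := hu ▸ hmono hw
    have h2 : φ w = v := le_antisymm h1 (hv h1)
    exact (huniq w h2).ge
end

section
/- Let φ : U → V be a splitting of a poset V at a maximal node m (as defined: surjective monotone, φ⁻¹(m) a finite nonempty set of maximal nodes of positive height, all other fibers singletons, and the lifting property: if φ(x') ≤ y then there is y' ≥ x' with φ(y') = y). Then dim U = dim V, where dim is the supremum of lengths of chains. -/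
/-- If `φ : U → V` is a splitting of the poset `V` at the maximal node `m`,
then `dim U = dim V`. -/
theorem splitting_krullDim_eq {U V : Type*} [PartialOrder U] [PartialOrder V]
    (φ : U → V) (m : V) (M : Set U)
    (hmono : Monotone φ) (hsurj : Function.Surjective φ)
    (hmmax : IsMax m) (hmht : 0 < Order.height m)
    (hMfin : M.Finite) (hMne : M.Nonempty)
    (hMmax : ∀ u ∈ M, IsMax u) (hMht : ∀ u ∈ M, 0 < Order.height u)
    (hfib : φ ⁻¹' {m} = M)
    (hsing : ∀ v : V, v ≠ m → ∃! u : U, φ u = v)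
    (hlift : ∀ (x' : U) (y : V), φ x' ≤ y → ∃ y' : U, x' ≤ y' ∧ φ y' = y) :
    Order.krullDim U = Order.krullDim V := by
  have hstrict : StrictMono φ := by
    intro a b hab
    refine lt_of_le_of_ne (hmono hab.le) fun heq => ?_
    by_cases h : φ a = m
    · have ha : a ∈ M := by rw [← hfib]; exact h
      exact hab.ne (le_antisymm hab.le (hMmax a ha hab.le))
    · obtain ⟨u, -, huniq⟩ := hsing (φ a) h
      exact hab.ne ((huniq a rfl).trans (huniq b heq.symm).symm)
  refine le_antisymm (Order.krullDim_le_of_strictMono φ hstrict) ?_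
  -- lift chains from V to U
  have key : ∀ n : ℕ, ∀ p : LTSeries V, p.length = n →
      ∃ q : LTSeries U, q.length = n ∧ φ q.last = p.last := by
    intro n
    induction n with
    | zero =>
      intro p hp
      obtain ⟨u, hu⟩ := hsurj p.last
      exact ⟨RelSeries.singleton _ u, rfl, by simpa using hu⟩
    | succ n ih =>
      intro p hp
      obtain ⟨q, hqlen, hqlast⟩ := ih p.eraseLast (by simp [hp])
      have hrel : p.eraseLast.last < p.last :=
        p.eraseLast_last_rel_last (by omega)
      obtain ⟨y', hy1, hy2⟩ := hlift q.last p.last (hqlast ▸ hrel.le)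
      have hlt : q.last < y' := lt_of_le_of_ne hy1 fun h => by
        rw [← h, hqlast] at hy2
        exact hrel.ne hy2
      exact ⟨q.snoc y' hlt, by simp [hqlen], by simp [hy2]⟩
  refine iSup_le fun p => ?_
  obtain ⟨q, hqlen, -⟩ := key p.length p rfl
  exact le_iSup_of_le q (by simp [hqlen])
end

section
/- Let V be a poset of dimension at most 2 with a unique maximal node m. Define 𝓗_V* to be the set of all minimal nodes of V together with all height-one nodes dominating at least two minimal nodes, with m removed; define Λ_V to consist of all height-one elements of 𝓗_V* together with all nodes v ∈ 𝓗_V* for which no height-one element of 𝓗_V* lies above v. If a and b are distinct elements of Λ_V, then the set of common upper bounds of a and b in V equals {m}. -/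
/-!
`Λ_V` is an antichain: a node strictly below a height-one node of `𝓗_V*` has height zero, and
then the defining condition of `Λ_V` forbids it to lie below that node. Hence a common upper
bound `t ≠ m` of distinct `a, b ∈ Λ_V` lies strictly above both, and has height at least 2:
either `a` or `b` has height one, or both are minimal, and then `t` of height one would be a
height-one node of `𝓗_V*` above `a`. In dimension at most 2 a node of height 2 is maximal,
so `t = m`; and `m` is the greatest element, as every node lies below a maximal one.
-/

open Order

section KrullDim

variable {V : Type*} [PartialOrder V] {n : ℕ}

lemma Order.height_le_of_krullDim_le (hdim : krullDim V ≤ n) (x : V) : height x ≤ n := by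
  exact_mod_cast (height_le_krullDim x).trans hdim

lemma Order.height_lt_of_krullDim_le_of_not_isMax (hdim : krullDim V ≤ n) {x : V}
    (hx : ¬IsMax x) : height x < n := by
  obtain ⟨y, hxy⟩ := not_isMax_iff.mp hx
  have hfin : height x ≠ ⊤ :=
    ((height_le_of_krullDim_le hdim x).trans_lt (ENat.natCast_lt_top n)).ne
  exact (ENat.add_one_le_iff hfin).mp <|
    (height_add_one_le hxy).trans (height_le_of_krullDim_le hdim y)

/-- Climb along strictly increasing steps; each step lowers the (finite) coheight. -/
lemma Order.exists_le_isMax_of_krullDim_le (hdim : krullDim V ≤ n) (x : V) :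
    ∃ y, x ≤ y ∧ IsMax y := by
  suffices h : ∀ k : ℕ, ∀ x : V, coheight x ≤ k → ∃ y, x ≤ y ∧ IsMax y by
    exact h n x (by exact_mod_cast (coheight_le_krullDim x).trans hdim)
  intro k
  induction k with
  | zero => exact fun x hx ↦ ⟨x, le_rfl, coheight_eq_zero.mp (nonpos_iff_eq_zero.mp hx)⟩
  | succ k ih =>
    intro x hx
    by_cases hmax : IsMax x
    · exact ⟨x, le_rfl, hmax⟩
    obtain ⟨y, hxy⟩ := not_isMax_iff.mp hmax
    have hy : coheight y < k + 1 := by exact_mod_cast coheight_le_coe_iff.mp hx y hxy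
    obtain ⟨z, hyz, hz⟩ := ih y ((ENat.lt_add_one_iff (ENat.natCast_ne_top k)).mp hy)
    exact ⟨z, hxy.le.trans hyz, hz⟩

end KrullDim

section Lambda

variable {V : Type*} [PartialOrder V]

/-- The set `𝓗_V*`. -/
def hStar (m : V) : Set V :=
  {v : V | v ≠ m ∧ (IsMin v ∨ (height v = 1 ∧
      ∃ a b : V, IsMin a ∧ IsMin b ∧ a ≠ b ∧ a ≤ v ∧ b ≤ v))}

/-- The set `Λ_V`. -/
def lambdaSet (m : V) : Set V :=
  {v ∈ hStar m | height v = 1 ∨ ∀ h ∈ hStar m, height h = 1 → ¬ v ≤ h}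

variable {m a b t : V}

lemma isMin_or_height_eq_one_of_mem_hStar (hv : t ∈ hStar m) : IsMin t ∨ height t = 1 :=
  hv.2.imp_right And.left

lemma two_le_height_of_lt_of_height_eq_one (hab : a < b) (ha : height a = 1) : 2 ≤ height b := by
  simpa [ha, one_add_one_eq_two] using height_add_one_le hab

lemma isAntichain_lambdaSet : IsAntichain (· ≤ ·) (lambdaSet m) := by
  intro a ha b hb hab hle
  have hlt : a < b := hle.lt_of_ne hab
  have hb1 : height b = 1 :=
    (isMin_or_height_eq_one_of_mem_hStar hb.1).resolve_left hlt.not_isMin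
  have ha1 : height a ≠ 1 := fun ha1 ↦ by
    simpa [hb1] using two_le_height_of_lt_of_height_eq_one hlt ha1
  exact ha.2.resolve_left ha1 b hb.1 hb1 hle

lemma two_le_height_of_mem_lambdaSet (ha : a ∈ lambdaSet m) (hb : b ∈ lambdaSet m)
    (hab : a ≠ b) (hat : a ≤ t) (hbt : b ≤ t) (htm : t ≠ m) : 2 ≤ height t := by
  have hat' : a < t := hat.lt_of_ne <| by rintro rfl; exact isAntichain_lambdaSet hb ha hab.symm hbt
  have hbt' : b < t := hbt.lt_of_ne <| by rintro rfl; exact isAntichain_lambdaSet ha hb hab hat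
  by_cases ha1 : height a = 1
  · exact two_le_height_of_lt_of_height_eq_one hat' ha1
  by_cases hb1 : height b = 1
  · exact two_le_height_of_lt_of_height_eq_one hbt' hb1
  have hamin := (isMin_or_height_eq_one_of_mem_hStar ha.1).resolve_right ha1
  have hbmin := (isMin_or_height_eq_one_of_mem_hStar hb.1).resolve_right hb1
  have ht1 : height t ≠ 1 := fun ht1 ↦
    ha.2.resolve_left ha1 t ⟨htm, .inr ⟨ht1, a, b, hamin, hbmin, hab, hat, hbt⟩⟩ ht1 hat
  have ht0 : height t ≠ 0 := height_ne_zero.mpr hat'.not_isMin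
  exact Order.add_one_le_of_lt (lt_of_le_of_ne' (Order.one_le_iff_ne_zero.mpr ht0) ht1)

end Lambda

theorem lambda_common_upper_bounds_general {V : Type*} [PartialOrder V] (m : V)
    (hdim : Order.krullDim V ≤ 2)
    (huniq : ∀ x : V, IsMax x → x = m)
    (H Λ : Set V)
    (hH : H = {v : V | v ≠ m ∧ (IsMin v ∨ (Order.height v = 1 ∧
      ∃ a b : V, IsMin a ∧ IsMin b ∧ a ≠ b ∧ a ≤ v ∧ b ≤ v))})
    (hΛ : Λ = {v ∈ H | Order.height v = 1 ∨ ∀ h ∈ H, Order.height h = 1 → ¬ v ≤ h})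
    {a b : V} (ha : a ∈ Λ) (hb : b ∈ Λ) (hab : a ≠ b) :
    {t : V | a ≤ t ∧ b ≤ t} = {m} := by
  subst hH hΛ
  have hdim' : krullDim V ≤ (2 : ℕ) := by exact_mod_cast hdim
  have hle_m : ∀ x, x ≤ m := fun x ↦ by
    obtain ⟨y, hxy, hy⟩ := exists_le_isMax_of_krullDim_le hdim' x
    exact huniq y hy ▸ hxy
  refine Set.eq_singleton_iff_unique_mem.mpr
    ⟨⟨hle_m a, hle_m b⟩, fun t ⟨hat, hbt⟩ ↦ ?_⟩
  by_contra htm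
  have h2 := two_le_height_of_mem_lambdaSet ha hb hab hat hbt htm
  have hlt := height_lt_of_krullDim_le_of_not_isMax hdim' (mt (huniq t) htm)
  exact absurd h2 (not_le.mpr (by exact_mod_cast hlt))

/-- In a poset `V` of dimension at most 2 with a unique maximal node `m`, any two distinct
elements of `Λ_V` have `{m}` as their set of common upper bounds. -/
theorem lambda_common_upper_bounds {V : Type*} [PartialOrder V] (m : V)
    (hdim : Order.krullDim V ≤ 2)
    (hmax : IsMax m) (huniq : ∀ x : V, IsMax x → x = m)
    (H Λ : Set V)
    (hH : H = {v : V | v ≠ m ∧ (IsMin v ∨ (Order.height v = 1 ∧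
      ∃ a b : V, IsMin a ∧ IsMin b ∧ a ≠ b ∧ a ≤ v ∧ b ≤ v))})
    (hΛ : Λ = {v ∈ H | Order.height v = 1 ∨ ∀ h ∈ H, Order.height h = 1 → ¬ v ≤ h})
    {a b : V} (ha : a ∈ Λ) (hb : b ∈ Λ) (hab : a ≠ b) :
    {t : V | a ≤ t ∧ b ≤ t} = {m} :=
  lambda_common_upper_bounds_general m hdim huniq H Λ hH hΛ ha hb hab
end

section
/- Let R be a commutative Noetherian ring and suppose P ⊋ P' ⊋ P'' is a chain of prime ideals of R. Then there are infinitely many prime ideals Q with P'' ⊊ Q ⊊ P. -/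
/-!
If only finitely many primes lay strictly between `P''` and `P`, prime avoidance would give
`x ∈ P` outside `P''` and outside all of them; then `P` is minimal over `P'' + (x)`. Krull's
principal ideal theorem in the domain `R ⧸ P''` says the image of `P` has height at most one,
contradicting the chain `0 < P' / P'' < P / P''`.
-/

namespace Ideal

variable {R : Type*} [CommRing R]

lemma map_quotientMk_lt_map_quotientMk {I J K : Ideal R} (hIJ : I ≤ J) (hJK : J < K) :
    J.map (Quotient.mk I) < K.map (Quotient.mk I) := by
  refine lt_of_le_of_ne (map_mono hJK.le) fun h ↦ hJK.ne ?_
  simpa [comap_map_mk hIJ, comap_map_mk (hIJ.trans hJK.le)] using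
    congrArg (comap (Quotient.mk I)) h

lemma two_le_height_of_lt_of_lt {p q r : Ideal R} [p.IsPrime] [q.IsPrime] [r.IsPrime]
    (hpq : p < q) (hqr : q < r) : 2 ≤ r.height :=
  calc (2 : ℕ∞) ≤ p.height + 1 + 1 := by
        rw [add_assoc]; exact le_add_self
    _ ≤ q.height + 1 := by gcongr; exact height_add_one_le_of_lt_of_isPrime hpq
    _ ≤ r.height := height_add_one_le_of_lt_of_isPrime hqr

lemma exists_mem_not_mem_of_finite_primes_between {I P : Ideal R} (hIP : I < P)
    (hfin : {Q : Ideal R | Q.IsPrime ∧ I < Q ∧ Q < P}.Finite) :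
    ∃ x ∈ P, x ∉ I ∧ ∀ Q : Ideal R, Q.IsPrime → I < Q → Q < P → x ∉ Q := by
  classical
  have hprime : ∀ Q ∈ insert I hfin.toFinset, Q ≠ I → Q ≠ I → (id Q).IsPrime := by
    intro Q hQ hQI _
    exact (hfin.mem_toFinset.mp ((Finset.mem_insert.mp hQ).resolve_left hQI)).1
  have hP : ¬ (P : Set R) ⊆ ⋃ Q ∈ (↑(insert I hfin.toFinset) : Set (Ideal R)), ↑(id Q) := by
    rw [subset_union_prime I I hprime]
    rintro ⟨Q, hQ, hPQ⟩
    rcases Finset.mem_insert.mp hQ with rfl | hQ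
    · exact hIP.not_ge hPQ
    · exact (hfin.mem_toFinset.mp hQ).2.2.not_ge hPQ
  simp only [Set.not_subset, Set.mem_iUnion, Finset.coe_insert, Set.mem_insert_iff,
    Set.Finite.coe_toFinset, id, not_exists] at hP
  obtain ⟨x, hxP, hx⟩ := hP
  exact ⟨x, hxP, fun h ↦ hx I (.inl rfl) h, fun Q hQ hIQ hQP h ↦ hx Q (.inr ⟨hQ, hIQ, hQP⟩) h⟩

lemma exists_mem_minimalPrimes_sup_span_singleton_of_finite_primes_between {I P : Ideal R}
    [P.IsPrime] (hIP : I < P) (hfin : {Q : Ideal R | Q.IsPrime ∧ I < Q ∧ Q < P}.Finite) :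
    ∃ x, P ∈ (I ⊔ span {x}).minimalPrimes := by
  obtain ⟨x, hxP, hxI, hx⟩ := exists_mem_not_mem_of_finite_primes_between hIP hfin
  obtain ⟨p, hp, hpP⟩ := exists_minimalPrimes_le (J := P)
    (sup_le hIP.le (span_singleton_le_iff_mem _ |>.mpr hxP))
  have hxp : x ∈ p := hp.1.2 (mem_sup_right (mem_span_singleton_self x))
  have hIp : I < p := lt_of_le_of_ne (le_sup_left.trans hp.1.2) fun h ↦ hxI (h ▸ hxp)
  obtain rfl : p = P := by_contra fun hne ↦ hx p hp.isPrime hIp (lt_of_le_of_ne hpP hne) hxp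
  exact ⟨x, hp⟩

/-- Krull's principal ideal theorem, relative to `I`. -/
lemma not_lt_of_lt_of_mem_minimalPrimes_sup_span_singleton [IsNoetherianRing R]
    {I p q P : Ideal R} {x : R} [p.IsPrime] [q.IsPrime] (hP : P ∈ (I ⊔ span {x}).minimalPrimes)
    (hIp : I ≤ p) (hpq : p < q) : ¬ q < P := by
  intro hqP
  have := hP.isPrime
  have : (p.map (Quotient.mk I)).IsPrime := isPrime_map_quotientMk_of_isPrime hIp
  have : (q.map (Quotient.mk I)).IsPrime := isPrime_map_quotientMk_of_isPrime (hIp.trans hpq.le)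
  have : (P.map (Quotient.mk I)).IsPrime :=
    isPrime_map_quotientMk_of_isPrime (hIp.trans (hpq.trans hqP).le)
  have hge : 2 ≤ (P.map (Quotient.mk I)).height := two_le_height_of_lt_of_lt
    (map_quotientMk_lt_map_quotientMk hIp hpq)
    (map_quotientMk_lt_map_quotientMk (hIp.trans hpq.le) hqP)
  exact absurd (hge.trans (map_height_le_one_of_mem_minimalPrimes hP)) (by norm_num)

end Ideal

/-- In a commutative Noetherian ring, a saturated-or-not chain `P ⊋ P' ⊋ P''` of primes forces
infinitely many primes strictly between `P''` and `P`. -/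
theorem infinitely_many_primes_between {R : Type*} [CommRing R] [IsNoetherianRing R]
    (P P' P'' : Ideal R) (hP : P.IsPrime) (hP' : P'.IsPrime) (hP'' : P''.IsPrime)
    (h1 : P'' < P') (h2 : P' < P) :
    {Q : Ideal R | Q.IsPrime ∧ P'' < Q ∧ Q < P}.Infinite := by
  intro hfin
  obtain ⟨x, hx⟩ :=
    Ideal.exists_mem_minimalPrimes_sup_span_singleton_of_finite_primes_between (h1.trans h2) hfin
  exact Ideal.not_lt_of_lt_of_mem_minimalPrimes_sup_span_singleton hx le_rfl h1 h2
end

section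
/- Let R be an infinite commutative Noetherian ring. Then the cardinality of the set of prime ideals of R is at most the cardinality of R. -/
/-- An infinite commutative Noetherian ring has at most `|R|` prime ideals. -/
theorem card_primeSpectrum_le {R : Type*} [CommRing R] [IsNoetherianRing R] [Infinite R] :
    Cardinal.mk (PrimeSpectrum R) ≤ Cardinal.mk R := by
  have hfg : ∀ P : PrimeSpectrum R, ∃ s : Finset R, Ideal.span (↑s : Set R) = P.asIdeal := by
    intro P
    exact (IsNoetherian.noetherian P.asIdeal)
  choose f hf using hfg
  have hinj : Function.Injective f := by
    intro P Q h
    ext1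
    rw [← hf P, ← hf Q, h]
  calc Cardinal.mk (PrimeSpectrum R) ≤ Cardinal.mk (Finset R) :=
        Cardinal.mk_le_of_injective hinj
    _ = Cardinal.mk R := Cardinal.mk_finset_of_infinite R
end

section
/- Let R be a commutative Noetherian domain of Krull dimension two with finitely many maximal ideals, and let M be a maximal ideal of R with height M = 2. Then the cardinality of the set of height-one primes P with P ⊂ M and P contained in no other maximal ideal of R is at least ℵ₀ + |R/M|. -/
/-!
A nonzero `z ∈ M` lying in no other maximal ideal lies in some `P ∈ [M/0]`: a minimal prime of
`(z)` inside `M` has height one by Krull's principal ideal theorem, so it is not `M`. Prime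
avoidance then shows that `[M/0]` is infinite. For the bound by `|R/M|`, pick a nonzero `x ∈ M`
outside the other maximal ideals and `y ∈ M` inside all of them but outside every minimal prime
of `(x)`. For each `r ∉ M` the element `x + r y` lies in some `P_r ∈ [M/0]`, and `y ∉ P_r`
because `P_r` would otherwise be minimal over `(x)`; hence `P_r = P_s` forces `r ≡ s (mod M)`.
-/

open Ideal Cardinal

namespace Ideal

variable {R : Type*} [CommRing R]

theorem exists_mem_forall_notMem_of_finite {I : Ideal R} {s : Set (Ideal R)} (hs : s.Finite)
    (hp : ∀ P ∈ s, P.IsPrime) (hI : ∀ P ∈ s, ¬ I ≤ P) : ∃ z ∈ I, ∀ P ∈ s, z ∉ P := by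
  by_contra! h
  obtain ⟨P, hP, hIP⟩ := (subset_union_prime_finite hs (f := id) I I
    (fun P hP _ _ => hp P hP)).mp fun z hz => by simpa using h z hz
  exact hI P hP hIP

theorem height_eq_one_of_mem_minimalPrimes_span_singleton [IsDomain R] [IsNoetherianRing R]
    {x : R} (hx : x ≠ 0) {P : Ideal R} (hP : P ∈ (span {x}).minimalPrimes) : P.height = 1 := by
  have hP0 : P ≠ ⊥ := fun h => hx (by simpa [h] using hP.1.2 (mem_span_singleton_self x))
  refine le_antisymm (height_le_one_of_isPrincipal_of_mem_minimalPrimes _ P hP) ?_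
  rwa [Order.one_le_iff_ne_zero, Ne, height_eq_zero_iff_eq_bot]

end Ideal

section HeightOneClass

variable {R : Type*} [CommRing R]

/-- The class `[M/0]`. -/
def heightOneClass (M : Ideal R) : Set (PrimeSpectrum R) :=
  {P | Order.height P = 1 ∧ P.asIdeal < M ∧ ∀ N : Ideal R, N.IsMaximal → P.asIdeal ≤ N → N = M}

variable {M : Ideal R}

theorem exists_mem_heightOneClass [IsDomain R] [IsNoetherianRing R] [M.IsPrime]
    (hM : 1 < M.height) {z : R} (hzM : z ∈ M) (hz0 : z ≠ 0)
    (hzN : ∀ N : Ideal R, N.IsMaximal → N ≠ M → z ∉ N) :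
    ∃ P ∈ heightOneClass M, z ∈ P.asIdeal := by
  obtain ⟨P, hPmin, hPM⟩ := exists_minimalPrimes_le (span_singleton_le_iff_mem M |>.mpr hzM)
  have hP1 := height_eq_one_of_mem_minimalPrimes_span_singleton hz0 hPmin
  have hzP : z ∈ P := hPmin.1.2 (mem_span_singleton_self z)
  refine ⟨⟨P, hPmin.1.1⟩, ⟨?_, ?_, ?_⟩, hzP⟩
  · exact (PrimeSpectrum.height_eq_orderHeight _).symm.trans hP1
  · refine lt_of_le_of_ne hPM fun h => ?_
    rw [← h, hP1] at hM
    exact lt_irrefl _ hM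
  · intro N hN hPN
    by_contra hNM
    exact hzN N hN hNM (hPN hzP)

theorem exists_mem_ne_zero_forall_notMem [IsDomain R] [M.IsMaximal]
    (hsemi : {N : Ideal R | N.IsMaximal}.Finite) (hM : M ≠ ⊥) {s : Set (Ideal R)}
    (hs : s.Finite) (hp : ∀ P ∈ s, P.IsPrime) (hMs : ∀ P ∈ s, ¬ M ≤ P) :
    ∃ z ∈ M, z ≠ 0 ∧ (∀ N : Ideal R, N.IsMaximal → N ≠ M → z ∉ N) ∧ ∀ P ∈ s, z ∉ P := by
  set T := insert ⊥ ({N : Ideal R | N.IsMaximal ∧ N ≠ M} ∪ s)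
  have hT : T.Finite := ((hsemi.subset fun N hN => hN.1).union hs).insert ⊥
  have hTprime : ∀ P ∈ T, P.IsPrime := by
    rintro P (rfl | ⟨hP, -⟩ | hP)
    exacts [isPrime_bot, hP.isPrime, hp P hP]
  have hMT : ∀ P ∈ T, ¬ M ≤ P := by
    rintro P (rfl | ⟨hP, hPM⟩ | hP)
    exacts [fun h => hM (le_bot_iff.mp h),
      fun h => hPM (IsMaximal.eq_of_le ‹_› hP.ne_top h).symm, hMs P hP]
  obtain ⟨z, hzM, hz⟩ := exists_mem_forall_notMem_of_finite hT hTprime hMT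
  exact ⟨z, hzM, fun h => hz ⊥ (Set.mem_insert _ _) (by simp [h]),
    fun N hN hNM => hz N (Or.inr (Or.inl ⟨hN, hNM⟩)), fun P hP => hz P (Or.inr (Or.inr hP))⟩

theorem heightOneClass_infinite [IsDomain R] [IsNoetherianRing R] [M.IsMaximal]
    (hsemi : {N : Ideal R | N.IsMaximal}.Finite) (hM : 1 < M.height) :
    (heightOneClass M).Infinite := by
  intro hfin
  have hM0 : M ≠ ⊥ := by rintro rfl; simp at hM
  obtain ⟨z, hzM, hz0, hzN, hzS⟩ := exists_mem_ne_zero_forall_notMem hsemi hM0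
    (hfin.image PrimeSpectrum.asIdeal) (by rintro _ ⟨P, -, rfl⟩; exact P.isPrime)
    (by rintro _ ⟨P, hP, rfl⟩ h; exact hP.2.1.not_ge h)
  obtain ⟨P, hP, hzP⟩ := exists_mem_heightOneClass hM hzM hz0 hzN
  exact hzS _ ⟨P, hP, rfl⟩ hzP

theorem exists_mem_forall_notMem_minimalPrimes [IsNoetherianRing R] [M.IsMaximal]
    (hsemi : {N : Ideal R | N.IsMaximal}.Finite) (hM : 1 < M.height) {x : R}
    (hxN : ∀ N : Ideal R, N.IsMaximal → N ≠ M → x ∉ N) :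
    ∃ y ∈ M, (∀ N : Ideal R, N.IsMaximal → N ≠ M → y ∈ N) ∧
      ∀ p ∈ (span {x}).minimalPrimes, y ∉ p := by
  have hO : {N : Ideal R | N.IsMaximal ∧ N ≠ M}.Finite := hsemi.subset fun N hN => hN.1
  set F := hO.toFinset
  have hF : ∀ p ∈ (span {x}).minimalPrimes, ¬ M ⊓ F.inf id ≤ p := by
    intro p hp hle
    have hpp := hp.1.1
    rcases hpp.inf_le.mp hle with hMp | hFp
    · have hp1 := height_le_one_of_isPrincipal_of_mem_minimalPrimes _ p hp
      rw [← IsMaximal.eq_of_le ‹_› hpp.ne_top hMp] at hp1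
      exact hp1.not_gt hM
    · obtain ⟨N, hN, hNp⟩ := hpp.inf_le'.mp hFp
      have hN' : N.IsMaximal ∧ N ≠ M := hO.mem_toFinset.mp hN
      rw [hN'.1.eq_of_le hpp.ne_top hNp] at hN'
      exact hxN p hN'.1 hN'.2 (hp.1.2 (mem_span_singleton_self x))
  obtain ⟨y, hy, hyp⟩ := exists_mem_forall_notMem_of_finite
    (finite_minimalPrimes_of_isNoetherianRing R _) (fun p hp => hp.1.1) hF
  exact ⟨y, hy.1, fun N hN hNM => Finset.inf_le (f := id) (hO.mem_toFinset.mpr ⟨hN, hNM⟩) hy.2,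
    hyp⟩

theorem exists_add_mul_mem_heightOneClass [IsDomain R] [IsNoetherianRing R] [M.IsPrime]
    (hM : 1 < M.height) {x y r : R} (hxM : x ∈ M)
    (hxN : ∀ N : Ideal R, N.IsMaximal → N ≠ M → x ∉ N) (hyM : y ∈ M)
    (hyN : ∀ N : Ideal R, N.IsMaximal → N ≠ M → y ∈ N)
    (hyx : ∀ p ∈ (span {x}).minimalPrimes, y ∉ p) (hr : r ∉ M) :
    ∃ P ∈ heightOneClass M, x + r * y ∈ P.asIdeal := by
  refine exists_mem_heightOneClass hM (M.add_mem hxM (M.mul_mem_left r hyM)) (fun h => ?_)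
    fun N hN hNM hmem => hxN N hN hNM ?_
  · obtain ⟨p, hp, hpM⟩ := exists_minimalPrimes_le (span_singleton_le_iff_mem M |>.mpr hxM)
    have hry : r * y ∈ p := by
      rw [eq_neg_of_add_eq_zero_right h]
      exact p.neg_mem (hp.1.2 (mem_span_singleton_self x))
    exact (hp.1.1.mem_or_mem hry).elim (fun hrp => hr (hpM hrp)) (hyx p hp)
  · simpa using N.sub_mem hmem (N.mul_mem_left r (hyN N hN hNM))

theorem sub_mem_of_add_mul_mem [IsDomain R] [IsNoetherianRing R] {x y r₁ r₂ : R} (hx0 : x ≠ 0)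
    (hyx : ∀ p ∈ (span {x}).minimalPrimes, y ∉ p) {P : Ideal R} [P.IsPrime] (hP : P.height = 1)
    (h₁ : x + r₁ * y ∈ P) (h₂ : x + r₂ * y ∈ P) : r₁ - r₂ ∈ P := by
  have hyP : y ∉ P := by
    intro hyP
    have hxP : x ∈ P := by simpa using P.sub_mem h₁ (P.mul_mem_left r₁ hyP)
    refine hyx P (mem_minimalPrimes_of_height_le (span_singleton_le_iff_mem P |>.mpr hxP) ?_) hyP
    rw [hP, height_span_singleton_eq_one_of_mem_nonZeroDivisors (mem_nonZeroDivisors_of_ne_zero hx0)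
      fun hu => ‹P.IsPrime›.ne_top (P.eq_top_of_isUnit_mem hxP hu)]
  have : (r₁ - r₂) * y ∈ P := by simpa [sub_mul] using P.sub_mem h₁ h₂
  exact (‹P.IsPrime›.mem_or_mem this).resolve_right hyP

theorem mk_compl_zero_le_mk_heightOneClass [IsDomain R] [IsNoetherianRing R] [M.IsMaximal]
    (hsemi : {N : Ideal R | N.IsMaximal}.Finite) (hM : 1 < M.height) :
    #(({0}ᶜ : Set (R ⧸ M))) ≤ #(heightOneClass M) := by
  have hM0 : M ≠ ⊥ := by rintro rfl; simp at hM
  obtain ⟨x, hxM, hx0, hxN, -⟩ :=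
    exists_mem_ne_zero_forall_notMem hsemi hM0 Set.finite_empty (by simp) (by simp)
  obtain ⟨y, hyM, hyN, hyx⟩ := exists_mem_forall_notMem_minimalPrimes hsemi hM hxN
  have hc : ∀ c : ({0}ᶜ : Set (R ⧸ M)), ∃ r : R, Ideal.Quotient.mk M r = c ∧
      ∃ P ∈ heightOneClass M, x + r * y ∈ P.asIdeal := by
    rintro ⟨c, hc⟩
    obtain ⟨r, rfl⟩ := Quotient.mk_surjective c
    refine ⟨r, rfl, exists_add_mul_mem_heightOneClass hM hxM hxN hyM hyN hyx fun hr => hc ?_⟩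
    exact Quotient.eq_zero_iff_mem.mpr hr
  choose r hr P hPS hxP using hc
  refine mk_le_of_injective (f := fun c => ⟨P c, hPS c⟩) fun c₁ c₂ h => Subtype.ext ?_
  have hP : P c₁ = P c₂ := congrArg Subtype.val h
  have hr₁₂ := sub_mem_of_add_mul_mem hx0 hyx ((P c₁).height_eq_orderHeight.trans (hPS c₁).1)
    (hxP c₁) (hP ▸ hxP c₂)
  rw [← hr c₁, ← hr c₂, Ideal.Quotient.eq]
  exact (hPS c₁).2.1.le hr₁₂

end HeightOneClass

theorem card_class_ge_general {R : Type*} [CommRing R] [IsDomain R] [IsNoetherianRing R]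
    (hsemi : {I : Ideal R | I.IsMaximal}.Finite)
    (M : Ideal R) (hM : M.IsMaximal)
    (hht : Order.height (⟨M, hM.isPrime⟩ : PrimeSpectrum R) = 2) :
    Cardinal.aleph0 + Cardinal.mk (R ⧸ M) ≤
      Cardinal.mk {P : PrimeSpectrum R | Order.height P = 1 ∧ P.asIdeal < M ∧
        ∀ N : Ideal R, N.IsMaximal → P.asIdeal ≤ N → N = M} := by
  have hM2 : 1 < M.height := by
    rw [show M.height = 2 from (PrimeSpectrum.height_eq_orderHeight ⟨M, hM.isPrime⟩).trans hht]
    norm_num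
  have hinf : ℵ₀ ≤ #(heightOneClass M) :=
    infinite_iff.mp (heightOneClass_infinite hsemi hM2).to_subtype
  have hone : #({0} : Set (R ⧸ M)) ≤ #(heightOneClass M) := by
    rw [mk_singleton]
    exact one_le_aleph0.trans hinf
  rw [← mk_sum_compl {0}]
  exact add_le_of_le hinf hinf
    (add_le_of_le hinf hone (mk_compl_zero_le_mk_heightOneClass hsemi hM2))

/-- For a two-dimensional semilocal Noetherian domain `R` and a maximal ideal `M` of height 2,
the class `[M/0]` of height-one primes contained in `M` and in no other maximal ideal has
cardinality at least `ℵ₀ + |R/M|`. -/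
theorem card_class_ge {R : Type*} [CommRing R] [IsDomain R] [IsNoetherianRing R]
    (hdim : ringKrullDim R = 2)
    (hsemi : {I : Ideal R | I.IsMaximal}.Finite)
    (M : Ideal R) (hM : M.IsMaximal)
    (hht : Order.height (⟨M, hM.isPrime⟩ : PrimeSpectrum R) = 2) :
    Cardinal.aleph0 + Cardinal.mk (R ⧸ M) ≤
      Cardinal.mk {P : PrimeSpectrum R | Order.height P = 1 ∧ P.asIdeal < M ∧
        ∀ N : Ideal R, N.IsMaximal → P.asIdeal ≤ N → N = M} :=
  card_class_ge_general hsemi M hM hht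
end

section
/- Let Λ be an infinite well-ordered set of cardinality β such that for every a ∈ Λ, the set of strict predecessors of a has cardinality strictly less than β. Then every subset X ⊆ Λ of cardinality β can be written as a disjoint union of β sets X_a, indexed by a ∈ Λ, such that |X_a| = β and every element of X_a is ≥ a. -/
/-!
Since `Λ` is infinite, `X` is in bijection with `Λ × Λ`, so `X` carries a map `p` to `Λ` all of
whose fibres have cardinality `|Λ|`. Sending `b` to `min (p b) b` instead only moves the points
`b < p b`, and the fibre over `a` loses at most the fewer than `|Λ|` points below `a`; so the
fibres of `b ↦ min (p b) b` on `X` still have cardinality `|Λ|`, and every point of the fibre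
over `a` is `≥ a`.
-/

open Cardinal Set

universe u

theorem Cardinal.mk_sdiff_eq_of_mk_lt {α : Type*} {S T : Set α} (hS : ℵ₀ ≤ #S) (hT : #T < #S) :
    #(S \ T : Set α) = #S := by
  have hsum := mk_sdiff_add_mk (inter_subset_left : S ∩ T ⊆ S)
  rw [sdiff_self_inter] at hsum
  exact eq_of_add_eq_of_aleph0_le ((add_comm _ _).trans hsum)
    ((mk_le_mk_of_subset inter_subset_right).trans_lt hT) hS

theorem exists_inter_preimage_singleton_mk_eq {α β : Type u} [Infinite β] {X : Set α}
    (hX : #X = #β) : ∃ p : α → β, ∀ b, #(X ∩ p ⁻¹' {b} : Set α) = #β := by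
  classical
  have hXsq : #X = #(β × β) := by rw [mk_prod, lift_id, mul_eq_self (aleph0_le_mk β), hX]
  obtain ⟨e⟩ := Cardinal.eq.mp hXsq
  refine ⟨fun x => if h : x ∈ X then (e ⟨x, h⟩).1 else Classical.arbitrary β, fun b => ?_⟩
  refine le_antisymm ?_ ?_
  · exact (mk_le_mk_of_subset inter_subset_left).trans hX.le
  · refine mk_le_of_injective (f := fun c => ⟨e.symm (b, c), (e.symm (b, c)).2, ?_⟩) ?_
    · simp
    · intro c c' hcc'
      simpa using congrArg (fun x => (e ⟨x.1, x.2.1⟩).2) hcc'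

theorem mk_inter_preimage_min_self_eq {α : Type*} [LinearOrder α] [Infinite α]
    (hpred : ∀ a : α, #(Iio a) < #α) {X : Set α} {p : α → α}
    (hp : ∀ a, #(X ∩ p ⁻¹' {a} : Set α) = #α) (a : α) :
    #(X ∩ (fun b => min (p b) b) ⁻¹' {a} : Set α) = #α := by
  refine le_antisymm (mk_set_le _) ?_
  calc #α = #((X ∩ p ⁻¹' {a}) \ Iio a : Set α) := by
        rw [mk_sdiff_eq_of_mk_lt (by rw [hp]; exact aleph0_le_mk α) (by rw [hp]; exact hpred a),
          hp]
    _ ≤ #(X ∩ (fun b => min (p b) b) ⁻¹' {a} : Set α) := by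
        refine mk_le_mk_of_subset ?_
        rintro b ⟨⟨hbX, hpb : p b = a⟩, hab : ¬b < a⟩
        refine ⟨hbX, show min (p b) b = a from ?_⟩
        rw [hpb, min_eq_left (not_lt.mp hab)]

theorem partition_of_large_subset_general {Λ : Type*} [LinearOrder Λ] [Infinite Λ]
    (hpred : ∀ a : Λ, Cardinal.mk {b : Λ | b < a} < Cardinal.mk Λ)
    (X : Set Λ) (hX : Cardinal.mk X = Cardinal.mk Λ) :
    ∃ f : Λ → Set Λ,
      (∀ a, f a ⊆ X) ∧
      (Pairwise fun a b => Disjoint (f a) (f b)) ∧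
      (⋃ a, f a) = X ∧
      (∀ a, Cardinal.mk (f a) = Cardinal.mk Λ) ∧
      (∀ a, ∀ b ∈ f a, a ≤ b) := by
  obtain ⟨p, hp⟩ := exists_inter_preimage_singleton_mk_eq hX
  set g : Λ → Λ := fun b => min (p b) b
  refine ⟨fun a => X ∩ g ⁻¹' {a}, fun a => inter_subset_left, fun a b hab => ?_, ?_,
    mk_inter_preimage_min_self_eq hpred hp, ?_⟩
  · exact ((pairwise_disjoint_fiber g hab).inter_left' X).inter_right' X
  · rw [← inter_iUnion, ← preimage_iUnion, iUnion_of_singleton, preimage_univ, inter_univ]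
  · rintro a b ⟨-, hb⟩
    exact hb ▸ min_le_right _ _

/-- If `Λ` is an infinite well-ordered set of cardinality `β` in which every element has fewer
than `β` strict predecessors, then any subset `X` of cardinality `β` is a disjoint union of `β`
sets `X a` (indexed by `a ∈ Λ`), each of cardinality `β` and with all elements `≥ a`. -/
theorem partition_of_large_subset {Λ : Type*} [LinearOrder Λ] [WellFoundedLT Λ] [Infinite Λ]
    (hpred : ∀ a : Λ, Cardinal.mk {b : Λ | b < a} < Cardinal.mk Λ)
    (X : Set Λ) (hX : Cardinal.mk X = Cardinal.mk Λ) :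
    ∃ f : Λ → Set Λ,
      (∀ a, f a ⊆ X) ∧
      (Pairwise fun a b => Disjoint (f a) (f b)) ∧
      (⋃ a, f a) = X ∧
      (∀ a, Cardinal.mk (f a) = Cardinal.mk Λ) ∧
      (∀ a, ∀ b ∈ f a, a ≤ b) :=
  partition_of_large_subset_general hpred X hX
end

section
/- Let V be a poset of dimension at most 2 with a unique maximal node m, and suppose V is simple in the sense that Λ_V (the set of height-one elements of 𝓗_V* together with elements of 𝓗_V* above which no height-one element of 𝓗_V* lies, where 𝓗_V* consists of the minimal nodes and the height-one nodes dominating at least two minimal nodes, with m removed) is a singleton. If dim V = 1, then V has exactly one minimal element. -/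
/-!
In dimension one every element is minimal or maximal, so every node other than the unique
maximal node `m` is minimal and lies strictly below `m`. Hence all of `𝓗_V*` consists of minimal
nodes, none of height one, and `Λ_V = 𝓗_V* = V \ {m}`. Simplicity makes this a single node `q`;
it is minimal, and `m` is not, since `q < m`.
-/

namespace Order

variable {V : Type*} [PartialOrder V] {m v : V}

lemma isMin_of_ne_of_krullDim_le_one (hdim : krullDim V ≤ 1)
    (huniq : ∀ x : V, IsMax x → x = m) (hv : v ≠ m) : IsMin v :=
  (krullDim_le_one_iff.mp hdim v).resolve_right (mt (huniq v) hv)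

lemma lt_of_ne_of_krullDim_le_one (hdim : krullDim V ≤ 1)
    (huniq : ∀ x : V, IsMax x → x = m) (hv : v ≠ m) : v < m := by
  obtain ⟨w, hvw⟩ := not_isMax_iff.mp (mt (huniq v) hv)
  have hw : IsMax w := (krullDim_le_one_iff.mp hdim w).resolve_left fun hw => hw.not_lt hvw
  exact huniq w hw ▸ hvw

lemma isMin_iff_ne_of_krullDim_le_one [Nontrivial V] (hdim : krullDim V ≤ 1)
    (huniq : ∀ x : V, IsMax x → x = m) : IsMin v ↔ v ≠ m := by
  refine ⟨?_, isMin_of_ne_of_krullDim_le_one hdim huniq⟩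
  rintro hmin rfl
  obtain ⟨q, hq⟩ := exists_ne v
  exact hmin.not_lt (lt_of_ne_of_krullDim_le_one hdim huniq hq)

end Order

theorem simple_dim_one_unique_min_general {V : Type*} [PartialOrder V] (m : V)
    (huniq : ∀ x : V, IsMax x → x = m)
    (H Λ : Set V)
    (hH : H = {v : V | v ≠ m ∧ (IsMin v ∨ (Order.height v = 1 ∧
      ∃ a b : V, IsMin a ∧ IsMin b ∧ a ≠ b ∧ a ≤ v ∧ b ≤ v))})
    (hΛ : Λ = {v ∈ H | Order.height v = 1 ∨ ∀ h ∈ H, Order.height h = 1 → ¬ v ≤ h})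
    (hsimple : ∃ q : V, Λ = {q})
    (hdim : Order.krullDim V = 1) :
    ∃! t : V, IsMin t := by
  have hmin : ∀ v : V, v ≠ m → IsMin v := fun v =>
    Order.isMin_of_ne_of_krullDim_le_one hdim.le huniq
  have hΛ_eq : Λ = {v | v ≠ m} := by
    subst hH hΛ
    ext v
    refine ⟨fun hv => hv.1.1, fun hv => ⟨⟨hv, .inl (hmin v hv)⟩, .inr ?_⟩⟩
    rintro h ⟨hhm, -⟩ hh
    simp [Order.height_eq_zero.mpr (hmin h hhm)] at hh
  obtain ⟨q, hq⟩ := hsimple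
  have hne_iff : ∀ v : V, v ≠ m ↔ v = q := Set.ext_iff.mp (hΛ_eq.symm.trans hq)
  have : Nontrivial V := ⟨⟨q, m, (hne_iff q).mpr rfl⟩⟩
  simp only [Order.isMin_iff_ne_of_krullDim_le_one hdim.le huniq, hne_iff]
  exact existsUnique_eq

/-- A simple poset (with `Λ_V` a singleton) of dimension 1 with a unique maximal node has
exactly one minimal element. -/
theorem simple_dim_one_unique_min {V : Type*} [PartialOrder V] (m : V)
    (hdim2 : Order.krullDim V ≤ 2)
    (hmax : IsMax m) (huniq : ∀ x : V, IsMax x → x = m)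
    (H Λ : Set V)
    (hH : H = {v : V | v ≠ m ∧ (IsMin v ∨ (Order.height v = 1 ∧
      ∃ a b : V, IsMin a ∧ IsMin b ∧ a ≠ b ∧ a ≤ v ∧ b ≤ v))})
    (hΛ : Λ = {v ∈ H | Order.height v = 1 ∨ ∀ h ∈ H, Order.height h = 1 → ¬ v ≤ h})
    (hsimple : ∃ q : V, Λ = {q})
    (hdim : Order.krullDim V = 1) :
    ∃! t : V, IsMin t :=
  simple_dim_one_unique_min_general m huniq H Λ hH hΛ hsimple hdim
end

section
/- Let V be a poset of dimension 2 with a unique maximal node m, at least two minimal nodes, satisfying: every nonempty intersection class [m/t] (height-one nodes whose only strict upper bound is m and whose only strict lower bound is the minimal node t) has cardinality 0 or |V|, every node of height one dominating two minimal nodes is unique if Λ_V = {q} is a singleton. Then under these hypotheses, q has height one and every minimal node of V lies below q. -/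
/-!
Every member `t` of `𝓗_V*` lies below `q`: either `t` is below some height-one member `h`, which
then belongs to `Λ_V = {q}`, or `t` itself belongs to `Λ_V`. A longest chain of `V` has positive
length and ends at a maximal node, i.e. at `m`; so `m` is not minimal, and all minimal nodes
belong to `𝓗_V*` and lie below `q`.
If `q` were minimal, the two distinct minimal nodes would both equal `q`; so `q` has height one.
-/

theorem LTSeries.isMax_last_longestOf {α : Type*} [Preorder α] [FiniteDimensionalOrder α] :
    IsMax (LTSeries.longestOf α).last := by
  intro y hy
  by_contra hyl
  have := LTSeries.longestOf_is_longest ((LTSeries.longestOf α).snoc y (lt_of_le_not_ge hy hyl))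
  simp at this

theorem Order.not_isMin_of_forall_isMax_eq {α : Type*} [Preorder α] {m : α}
    (hpos : 0 < Order.krullDim α) (hfin : Order.krullDim α ≠ ⊤)
    (huniq : ∀ x : α, IsMax x → x = m) : ¬ IsMin m := by
  have : FiniteDimensionalOrder α :=
    Order.finiteDimensionalOrder_iff_krullDim_ne_bot_and_top.mpr ⟨hpos.ne_bot, hfin⟩
  set p := LTSeries.longestOf α
  have hlen : 0 < p.length := by
    rw [Order.krullDim_eq_length_of_finiteDimensionalOrder] at hpos
    exact_mod_cast hpos
  rw [← huniq _ LTSeries.isMax_last_longestOf]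
  exact (p.strictMono (show (0 : Fin (p.length + 1)) < Fin.last _ from hlen)).not_isMin

theorem le_of_mem_of_sep_eq_singleton {α : Type*} [Preorder α] {H : Set α} {P : α → Prop}
    {q : α} (hq : {v ∈ H | P v ∨ ∀ h ∈ H, P h → ¬ v ≤ h} = {q}) {t : α} (ht : t ∈ H) :
    t ≤ q := by
  by_cases hcovered : ∃ h ∈ H, P h ∧ t ≤ h
  · obtain ⟨h, hH, hP, hth⟩ := hcovered
    have hhq : h ∈ ({q} : Set α) := hq ▸ ⟨hH, Or.inl hP⟩
    exact Set.mem_singleton_iff.mp hhq ▸ hth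
  · push Not at hcovered
    have htq : t ∈ ({q} : Set α) := hq ▸ ⟨ht, Or.inr hcovered⟩
    exact (Set.mem_singleton_iff.mp htq).le

theorem simple_dim_two_tent_general {V : Type*} [PartialOrder V] (m : V)
    (hdim : Order.krullDim V = 2)
    (huniq : ∀ x : V, IsMax x → x = m)
    (hmins : ∃ a b : V, IsMin a ∧ IsMin b ∧ a ≠ b)
    (H Λ : Set V)
    (hH : H = {v : V | v ≠ m ∧ (IsMin v ∨ (Order.height v = 1 ∧
      ∃ a b : V, IsMin a ∧ IsMin b ∧ a ≠ b ∧ a ≤ v ∧ b ≤ v))})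
    (hΛ : Λ = {v ∈ H | Order.height v = 1 ∨ ∀ h ∈ H, Order.height h = 1 → ¬ v ≤ h})
    (q : V) (hq : Λ = {q}) :
    Order.height q = 1 ∧ ∀ t : V, IsMin t → t ≤ q := by
  obtain ⟨a, b, ha, hb, hab⟩ := hmins
  have hm : ¬ IsMin m :=
    Order.not_isMin_of_forall_isMax_eq (by rw [hdim]; decide) (by rw [hdim]; decide) huniq
  have hminH : ∀ t : V, IsMin t → t ∈ H := fun t ht => hH ▸ ⟨fun htm => hm (htm ▸ ht), Or.inl ht⟩
  have hle : ∀ t ∈ H, t ≤ q := fun t ht => le_of_mem_of_sep_eq_singleton (hΛ ▸ hq) ht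
  have hqΛ : q ∈ Λ := hq ▸ rfl
  rw [hΛ, hH] at hqΛ
  obtain ⟨⟨-, hqmin | ⟨hq1, -⟩⟩, -⟩ := hqΛ
  · exact absurd ((hqmin.eq_of_ge (hle a (hminH a ha))).symm.trans
      (hqmin.eq_of_ge (hle b (hminH b hb)))) hab
  · exact ⟨hq1, fun t ht => hle t (hminH t ht)⟩

/-- In a proper simple `K`-poset of dimension 2 with unique maximal node `m`, more than one
minimal node, and `Λ_V = {q}`, the node `q` has height one and lies above every minimal node. -/
theorem simple_dim_two_tent {V : Type*} [PartialOrder V] (m : V)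
    (hdim : Order.krullDim V = 2)
    (hmax : IsMax m) (huniq : ∀ x : V, IsMax x → x = m)
    (hmins : ∃ a b : V, IsMin a ∧ IsMin b ∧ a ≠ b)
    (hproper : ∀ t : V, IsMin t →
      Cardinal.mk {x : V | {y : V | x < y} = {m} ∧ {y : V | y < x} = {t}} = 0 ∨
      Cardinal.mk {x : V | {y : V | x < y} = {m} ∧ {y : V | y < x} = {t}} = Cardinal.mk V)
    (H Λ : Set V)
    (hH : H = {v : V | v ≠ m ∧ (IsMin v ∨ (Order.height v = 1 ∧
      ∃ a b : V, IsMin a ∧ IsMin b ∧ a ≠ b ∧ a ≤ v ∧ b ≤ v))})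
    (hΛ : Λ = {v ∈ H | Order.height v = 1 ∨ ∀ h ∈ H, Order.height h = 1 → ¬ v ≤ h})
    (q : V) (hq : Λ = {q}) :
    Order.height q = 1 ∧ ∀ t : V, IsMin t → t ≤ q :=
  simple_dim_two_tent_general m hdim huniq hmins H Λ hH hΛ q hq
end

section
/- Let φ : U → V be a splitting of a poset V at a maximal node m with exceptional fiber M = φ⁻¹(m). Then for every maximal node n ∈ max U with n ∉ M, φ restricts to an order isomorphism from {u ∈ U : u ≤ n} onto {v ∈ V : v ≤ φ(n)}. -/
/-- If `φ : U → V` is a splitting of `V` at `m` with exceptional fiber `M`, then for every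
maximal node `n ∉ M` of `U`, `φ` restricts to an order isomorphism of `L_U(n)` onto
`L_V(φ n)`. -/
theorem splitting_iso_below_max {U V : Type*} [PartialOrder U] [PartialOrder V]
    (φ : U → V) (m : V) (M : Set U)
    (hmono : Monotone φ) (hsurj : Function.Surjective φ)
    (hmmax : IsMax m) (hmht : 0 < Order.height m)
    (hMfin : M.Finite) (hMne : M.Nonempty)
    (hMmax : ∀ u ∈ M, IsMax u) (hMht : ∀ u ∈ M, 0 < Order.height u)
    (hfib : φ ⁻¹' {m} = M)
    (hsing : ∀ v : V, v ≠ m → ∃! u : U, φ u = v)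
    (hlift : ∀ (x' : U) (y : V), φ x' ≤ y → ∃ y' : U, x' ≤ y' ∧ φ y' = y)
    (n : U) (hn : IsMax n) (hnM : n ∉ M) :
    Set.BijOn φ (Set.Iic n) (Set.Iic (φ n)) ∧
      ∀ u ∈ Set.Iic n, ∀ u' ∈ Set.Iic n, (φ u ≤ φ u' ↔ u ≤ u') := by
  -- φ u ≠ m for any u ≤ n
  have hne : ∀ u : U, u ≤ n → φ u ≠ m := by
    intro u hu hum
    have huM : u ∈ M := by rw [← hfib]; exact hum
    have : u = n := le_antisymm hu (hMmax u huM hu)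
    exact hnM (this ▸ huM)
  have hφn : φ n ≠ m := hne n le_rfl
  -- unique preimage of φ n is n
  have huniq : ∀ u : U, φ u = φ n → u = n := by
    intro u hu
    obtain ⟨w, hw, hw'⟩ := hsing (φ n) hφn
    exact (hw' u hu).trans (hw' n rfl).symm
  have hmapsto : Set.MapsTo φ (Set.Iic n) (Set.Iic (φ n)) := fun u hu => hmono hu
  have hrefl : ∀ u ∈ Set.Iic n, ∀ u' ∈ Set.Iic n, φ u ≤ φ u' → u ≤ u' := by
    intro u hu u' hu' hle
    obtain ⟨y, hy1, hy2⟩ := hlift u (φ u') hle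
    obtain ⟨w, hw, hw'⟩ := hsing (φ u') (hne u' hu')
    have : y = u' := (hw' y hy2).trans (hw' u' rfl).symm
    exact this ▸ hy1
  refine ⟨⟨hmapsto, ?_, ?_⟩, fun u hu u' hu' => ⟨hrefl u hu u' hu', fun h => hmono h⟩⟩
  · intro u hu u' hu' h
    exact le_antisymm (hrefl u hu u' hu' h.le) (hrefl u' hu' u hu h.ge)
  · intro v hv
    have hvm : v ≠ m := by
      rintro rfl
      exact hφn (le_antisymm (hmmax hv) hv)
    obtain ⟨u, hu, _⟩ := hsing v hvm
    obtain ⟨y, hy1, hy2⟩ := hlift u (φ n) (hu ▸ hv)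
    have : y = n := huniq y hy2
    exact ⟨u, by rw [Set.mem_Iic, ← this]; exact hy1, hu⟩
end

section
/- If a commutative ring S has finitely many maximal ideals and S_N is Noetherian for every maximal ideal N of S, then S is Noetherian. -/
/-- Nagata's criterion for semilocal rings: a commutative ring with finitely many maximal
ideals all of whose localizations at maximal ideals are Noetherian is Noetherian. -/
theorem noetherian_of_semilocal_localizations {S : Type*} [CommRing S]
    (hfin : {I : Ideal S | I.IsMaximal}.Finite)
    (hloc : ∀ (N : Ideal S) (hN : N.IsMaximal),
      IsNoetherianRing (@Localization.AtPrime S _ N hN.isPrime)) :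
    IsNoetherianRing S := by
  rw [isNoetherianRing_iff, ← monotone_stabilizes_iff_noetherian]
  intro f
  -- for each maximal ideal P, the mapped chain stabilizes
  have key : ∀ P (hP : P ∈ hfin.toFinset), ∃ n : ℕ, ∀ m, n ≤ m →
      haveI : P.IsPrime := (hfin.mem_toFinset.mp hP).isPrime
      Ideal.map (algebraMap S (Localization.AtPrime P)) (f n) =
      Ideal.map (algebraMap S (Localization.AtPrime P)) (f m) := by
    intro P hP
    have hPmax : P.IsMaximal := hfin.mem_toFinset.mp hP
    haveI : P.IsPrime := hPmax.isPrime
    haveI := hloc P hPmax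
    have := (monotone_stabilizes_iff_noetherian (R := Localization.AtPrime P)
      (M := Localization.AtPrime P)).mpr (by rwa [← isNoetherianRing_iff])
    exact this ⟨fun n => Ideal.map (algebraMap S (Localization.AtPrime P)) (f n),
      fun a b hab => Ideal.map_mono (f.monotone hab)⟩
  choose! g hg using key
  refine ⟨hfin.toFinset.sup g, fun m hm => ?_⟩
  apply Ideal.eq_of_localization_maximal
  intro P hPmax
  have hP : P ∈ hfin.toFinset := hfin.mem_toFinset.mpr hPmax
  have h1 := hg P hP (hfin.toFinset.sup g) (Finset.le_sup hP)
  have h2 := hg P hP m (le_trans (Finset.le_sup hP) hm)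
  rw [← h1, ← h2]
end
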